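/- For every depth-ranked extensional digraph (DRED) H, the structure 𝕍_ω(H) has a true power set operator: for any X ∈ M_ω(H) and any subset Y ⊆ {x ∈ M_ω(H) : x E_ω X}, there is Y' ∈ M_ω(H) such that Y = {x ∈ M_ω(H) : x E_ω Y'}. -/

import Mathlib

universe u

/-- A Depth-Ranked Extensional Digraph (DRED): an extensional digraph `(M, E)` on
ZF-sets together with a depth function `d : M → ℕ` satisfying
(i) if `x E y` then `d x ≤ d y + 1`, and (ii) if every `E`-predecessor of `x` is an
`E`-predecessor of `y` then `d x ≤ d y + 1`; and, for each `i < ω`, an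
ordinal-valued rank function `r i` on `{x ∈ M : d x < i}` which is strictly
increasing along `E`. -/
structure DRED where
  /-- The carrier set. -/
  M : ZFSet.{u}
  /-- The edge relation. -/
  E : ZFSet.{u} → ZFSet.{u} → Prop
  /-- The depth function. -/
  d : ZFSet.{u} → ℕ
  /-- The rank functions `r i`, defined (meaningfully) on `{x ∈ M : d x < i}`. -/
  r : ℕ → ZFSet.{u} → Ordinal.{1}
  dom_left : ∀ x y, E x y → x ∈ M
  dom_right : ∀ x y, E x y → y ∈ M
  ext : ∀ x y, x ∈ M → y ∈ M → (∀ z, E z x ↔ E z y) → x = y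
  depth_mem : ∀ x y, E x y → d x ≤ d y + 1
  depth_sub : ∀ x y, x ∈ M → y ∈ M → (∀ z, E z x → E z y) → d x ≤ d y + 1
  rank_lt : ∀ i z x, z ∈ M → x ∈ M → d z < i → d x < i → E z x → r i z < r i x

namespace DRED

/-- The von Neumann natural number `n` as a ZF-set, used as a tag. -/
def tag : ℕ → ZFSet
  | 0 => ∅
  | n + 1 => insert (tag n) (tag n)

/-- The bounded deficiency of `(M, E, d)`: the subsets `X` of `M` which are not the
`E`-predecessor set of any element of `M` and whose image `d '' X` is finite. -/
def bdefic (M : ZFSet) (E : ZFSet → ZFSet → Prop) (d : ZFSet → ℕ) : ZFSet :=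
  (ZFSet.powerset M).sep fun X =>
    (¬ ∃ y, y ∈ M ∧ ∀ z, z ∈ M → (z ∈ X ↔ E z y)) ∧ (d '' X.toSet).Finite

/-- The data of one level of the bounded-deficiency construction. -/
structure LevelData where
  /-- The carrier set. -/
  M : ZFSet.{u}
  /-- The edge relation. -/
  E : ZFSet.{u} → ZFSet.{u} → Prop
  /-- The depth function. -/
  d : ZFSet.{u} → ℕ
  /-- The rank functions. -/
  r : ℕ → ZFSet.{u} → Ordinal.{1}

open Classical in
/-- The DREDs `𝕍_n(H) = (M_n, E_n, d_n, ⟨r_{n,i}⟩)`: `𝕍_0(H)` is the isomorphic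
copy `{0} × M` of `H`; `M_{n+1} = M_n ∪ ({n+1} × D_bnd(𝕍_n))` with `E_{n+1}` adding
the pairs `(z, (n+1, X))` for `z ∈ X ∈ D_bnd(𝕍_n)`, with
`d_{n+1}(n+1, X) = max_{x ∈ X} d_n x` and `r_{n+1,i}(n+1, X) = sup_{x ∈ X} (r_{n,i} x + 1)`. -/
noncomputable def lvl (H : DRED) : ℕ → LevelData
  | 0 =>
    { M := ZFSet.prod {tag 0} H.M
      E := fun a b => ∃ x y, H.E x y ∧ a = ZFSet.pair (tag 0) x ∧ b = ZFSet.pair (tag 0) y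
      d := fun a => if h : ∃ x, x ∈ H.M ∧ a = ZFSet.pair (tag 0) x then H.d h.choose else 0
      r := fun i a => if h : ∃ x, x ∈ H.M ∧ a = ZFSet.pair (tag 0) x then H.r i h.choose else 0 }
  | n + 1 =>
    let p := lvl H n
    let D := bdefic p.M p.E p.d
    { M := p.M ∪ ZFSet.prod {tag (n + 1)} D
      E := fun a b => p.E a b ∨ ∃ X, X ∈ D ∧ b = ZFSet.pair (tag (n + 1)) X ∧ a ∈ X
      d := fun a =>
        if a ∈ p.M then p.d a
        else if h : ∃ X, X ∈ D ∧ a = ZFSet.pair (tag (n + 1)) X then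
          sSup (p.d '' h.choose.toSet)
        else 0
      r := fun i a =>
        if a ∈ p.M then p.r i a
        else if h : ∃ X, X ∈ D ∧ a = ZFSet.pair (tag (n + 1)) X then
          sSup ((fun x => p.r i x + 1) '' h.choose.toSet)
        else 0 }

/-- The carrier `M_n(H)` of `𝕍_n(H)`. -/
noncomputable def Mlvl (H : DRED) (n : ℕ) : ZFSet := (lvl H n).M

/-- The edge relation `E_n(H)` of `𝕍_n(H)`. -/
noncomputable def Elvl (H : DRED) (n : ℕ) : ZFSet → ZFSet → Prop := (lvl H n).E

/-- The depth function `d_n(H)` of `𝕍_n(H)`. -/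
noncomputable def dlvl (H : DRED) (n : ℕ) : ZFSet → ℕ := (lvl H n).d

/-- The rank functions `r_{n,i}(H)` of `𝕍_n(H)`. -/
noncomputable def rlvl (H : DRED) (n : ℕ) : ℕ → ZFSet → Ordinal.{1} := (lvl H n).r

/-- Membership in `M_ω(H) = ⋃_{n<ω} M_n(H)`. -/
def MemMomega (H : DRED) (x : ZFSet) : Prop := ∃ n, x ∈ Mlvl H n

/-- The edge relation `E_ω(H) = ⋃_{n<ω} E_n(H)` of `𝕍_ω(H)`. -/
def Eomega (H : DRED) (a b : ZFSet) : Prop := ∃ n, Elvl H n a b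

open Classical in
/-- The depth function `d_ω(H) = ⋃_{n<ω} d_n(H)` of `𝕍_ω(H)`. -/
noncomputable def domega (H : DRED) (a : ZFSet) : ℕ :=
  if h : ∃ n, a ∈ Mlvl H n then dlvl H h.choose a else 0

open Classical in
/-- The rank functions `r_{ω,i}(H) = ⋃_{n<ω} r_{n,i}(H)` of `𝕍_ω(H)`. -/
noncomputable def romega (H : DRED) (i : ℕ) (a : ZFSet) : Ordinal.{1} :=
  if h : ∃ n, a ∈ Mlvl H n then rlvl H h.choose i a else 0

end DRED

namespace DRED

variable (H : DRED)

theorem tag_mem {m n : ℕ} (h : m < n) : tag m ∈ tag n := by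
  induction n with
  | zero => omega
  | succ k ih =>
    rw [tag, ZFSet.mem_insert_iff]
    rcases Nat.lt_succ_iff_lt_or_eq.mp h with h' | h'
    · exact Or.inr (ih h')
    · exact Or.inl (by rw [h'])

theorem tag_ne {m n : ℕ} (h : m ≠ n) : tag m ≠ tag n := by
  rcases Nat.lt_or_gt_of_ne h with h' | h' <;> intro he
  · exact ZFSet.mem_irrefl _ (he ▸ tag_mem h')
  · exact ZFSet.mem_irrefl _ (he ▸ tag_mem h')

theorem Mlvl_succ (n : ℕ) :
    Mlvl H (n + 1) = Mlvl H n ∪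
      ZFSet.prod {tag (n + 1)} (bdefic (Mlvl H n) (Elvl H n) (dlvl H n)) := rfl

theorem Elvl_succ (n : ℕ) (a b : ZFSet) :
    Elvl H (n + 1) a b ↔ Elvl H n a b ∨
      ∃ X, X ∈ bdefic (Mlvl H n) (Elvl H n) (dlvl H n) ∧
        b = ZFSet.pair (tag (n + 1)) X ∧ a ∈ X := Iff.rfl

theorem mem_Mlvl_tag {n : ℕ} {a : ZFSet} (h : a ∈ Mlvl H n) :
    ∃ j x, j ≤ n ∧ a = ZFSet.pair (tag j) x := by
  induction n with
  | zero =>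
    obtain ⟨t, ht, x, hx, rfl⟩ := ZFSet.mem_prod.mp h
    rw [ZFSet.mem_singleton] at ht
    exact ⟨0, x, le_refl _, by rw [ht]⟩
  | succ k ih =>
    rw [Mlvl_succ, ZFSet.mem_union] at h
    rcases h with h | h
    · obtain ⟨j, x, hj, hx⟩ := ih h
      exact ⟨j, x, hj.trans (Nat.le_succ _), hx⟩
    · obtain ⟨t, ht, x, hx, rfl⟩ := ZFSet.mem_prod.mp h
      rw [ZFSet.mem_singleton] at ht
      exact ⟨k + 1, x, le_refl _, by rw [ht]⟩

theorem newnode_not_mem {n k : ℕ} (hk : k ≤ n) (X : ZFSet) :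
    ZFSet.pair (tag (n + 1)) X ∉ Mlvl H k := by
  intro h
  obtain ⟨j, x, hj, hx⟩ := mem_Mlvl_tag H h
  exact tag_ne (by omega : n + 1 ≠ j) (ZFSet.pair_injective hx).1

theorem Mlvl_mono {n m : ℕ} (h : n ≤ m) {a : ZFSet} (ha : a ∈ Mlvl H n) :
    a ∈ Mlvl H m := by
  induction m, h using Nat.le_induction with
  | base => exact ha
  | succ k hk ih => rw [Mlvl_succ, ZFSet.mem_union]; exact Or.inl ih

theorem Elvl_mono {n m : ℕ} (h : n ≤ m) {a b : ZFSet} (hab : Elvl H n a b) :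
    Elvl H m a b := by
  induction m, h using Nat.le_induction with
  | base => exact hab
  | succ k hk ih => exact Or.inl ih

theorem Elvl_dom {n : ℕ} {a b : ZFSet} (h : Elvl H n a b) :
    a ∈ Mlvl H n ∧ b ∈ Mlvl H n := by
  induction n with
  | zero =>
    obtain ⟨x, y, hxy, rfl, rfl⟩ := h
    refine ⟨ZFSet.mem_prod.mpr ⟨_, ZFSet.mem_singleton.mpr rfl, _, H.dom_left _ _ hxy, rfl⟩,
      ZFSet.mem_prod.mpr ⟨_, ZFSet.mem_singleton.mpr rfl, _, H.dom_right _ _ hxy, rfl⟩⟩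
  | succ k ih =>
    rcases h with h | ⟨X, hX, rfl, haX⟩
    · obtain ⟨h1, h2⟩ := ih h
      exact ⟨ZFSet.mem_union.mpr (Or.inl h1), ZFSet.mem_union.mpr (Or.inl h2)⟩
    · constructor
      · obtain ⟨hXp, -⟩ := ZFSet.mem_sep.mp hX
        exact ZFSet.mem_union.mpr (Or.inl (ZFSet.mem_powerset.mp hXp haX))
      · exact ZFSet.mem_union.mpr (Or.inr
          (ZFSet.mem_prod.mpr ⟨_, ZFSet.mem_singleton.mpr rfl, _, hX, rfl⟩))

theorem Elvl_down {n m : ℕ} {a b : ZFSet} (hb : b ∈ Mlvl H n) (h : Elvl H m a b) :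
    Elvl H n a b := by
  rcases le_total m n with hmn | hmn
  · exact Elvl_mono H hmn h
  · induction m, hmn using Nat.le_induction with
    | base => exact h
    | succ k hk ih =>
      rcases h with h | ⟨X, hX, rfl, haX⟩
      · exact ih h
      · exact absurd (Mlvl_mono H hk hb) (newnode_not_mem H (le_refl k) X)

theorem Eomega_iff {n : ℕ} {a b : ZFSet} (hb : b ∈ Mlvl H n) :
    Eomega H a b ↔ Elvl H n a b := by
  constructor
  · rintro ⟨m, h⟩; exact Elvl_down H hb h
  · exact fun h => ⟨n, h⟩

theorem dlvl_zero_pair {x : ZFSet} (hx : x ∈ H.M) :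
    dlvl H 0 (ZFSet.pair (tag 0) x) = H.d x := by
  classical
  have h : ∃ x', x' ∈ H.M ∧ ZFSet.pair (tag 0) x = ZFSet.pair (tag 0) x' := ⟨x, hx, rfl⟩
  show (if h' : ∃ x', x' ∈ H.M ∧ ZFSet.pair (tag 0) x = ZFSet.pair (tag 0) x'
      then H.d h'.choose else 0) = H.d x
  rw [dif_pos h]
  obtain ⟨-, he⟩ := h.choose_spec
  rw [← (ZFSet.pair_injective he).2]

theorem dlvl_succ_old {n : ℕ} {a : ZFSet} (ha : a ∈ Mlvl H n) :
    dlvl H (n + 1) a = dlvl H n a := by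
  classical
  show (if a ∈ Mlvl H n then dlvl H n a else _) = dlvl H n a
  rw [if_pos ha]

theorem pred_d_bdd {n : ℕ} {X : ZFSet} (hX : X ∈ Mlvl H n) :
    ∃ B, ∀ z, Elvl H n z X → dlvl H n z ≤ B := by
  induction n with
  | zero =>
    obtain ⟨t, ht, y, hy, rfl⟩ := ZFSet.mem_prod.mp hX
    rw [ZFSet.mem_singleton] at ht; subst ht
    refine ⟨H.d y + 1, ?_⟩
    rintro z ⟨x, y', hxy, rfl, he⟩
    obtain ⟨-, hy'⟩ := ZFSet.pair_injective he
    subst hy'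
    rw [dlvl_zero_pair H (H.dom_left _ _ hxy)]
    exact H.depth_mem _ _ hxy
  | succ k ih =>
    rw [Mlvl_succ, ZFSet.mem_union] at hX
    rcases hX with hX | hX
    · obtain ⟨B, hB⟩ := ih hX
      refine ⟨B, fun z hz => ?_⟩
      rcases hz with hz | ⟨X', hX', he, -⟩
      · rw [dlvl_succ_old H (Elvl_dom H hz).1]
        exact hB z hz
      · exact absurd hX (he ▸ newnode_not_mem H (le_refl k) X')
    · obtain ⟨t, ht, X', hX', rfl⟩ := ZFSet.mem_prod.mp hX
      rw [ZFSet.mem_singleton] at ht; subst ht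
      obtain ⟨-, -, hfin⟩ : _ ∧ _ ∧ (dlvl H k '' X'.toSet).Finite := by
        have := ZFSet.mem_sep.mp hX'
        exact ⟨this.1, this.2.1, this.2.2⟩
      obtain ⟨B, hB⟩ := hfin.bddAbove
      refine ⟨B, fun z hz => ?_⟩
      rcases hz with hz | ⟨X'', hX'', he, hzX⟩
      · exact absurd (Elvl_dom H hz).2 (newnode_not_mem H (le_refl k) X')
      · obtain ⟨-, hXe⟩ := ZFSet.pair_injective he
        subst hXe
        have hzM : z ∈ Mlvl H k :=
          ZFSet.mem_powerset.mp (ZFSet.mem_sep.mp hX'').1 hzX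
        rw [dlvl_succ_old H hzM]
        exact hB ⟨z, hzX, rfl⟩

end DRED

open DRED

/-- **The true power set operator of `𝕍_ω(H)`.** For every DRED `H`, any
`X ∈ M_ω(H)` and any subcollection `Y` of the `E_ω`-predecessors of `X` in
`M_ω(H)`, there is `Y' ∈ M_ω(H)` whose `E_ω`-predecessors in `M_ω(H)` are exactly
the elements of `Y`. -/
theorem Vomega_true_powerset (H : DRED) (X : ZFSet) (hX : MemMomega H X)
    (Y : Set ZFSet) (hY : Y ⊆ {x | MemMomega H x ∧ Eomega H x X}) :
    ∃ Y', MemMomega H Y' ∧ Y = {x | MemMomega H x ∧ Eomega H x Y'} := by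
  classical
  obtain ⟨n, hXn⟩ := hX
  have hYpred : ∀ x ∈ Y, Elvl H n x X := fun x hx =>
    (Eomega_iff H hXn).mp (hY hx).2
  have hYM : ∀ x ∈ Y, x ∈ Mlvl H n := fun x hx => (Elvl_dom H (hYpred x hx)).1
  set Y₀ := ZFSet.sep (fun z => z ∈ Y) (Mlvl H n) with hY₀def
  have hmemY₀ : ∀ z, z ∈ Y₀ ↔ z ∈ Y := fun z => by
    rw [hY₀def, ZFSet.mem_sep]
    exact ⟨fun h => h.2, fun h => ⟨hYM z h, h⟩⟩
  by_cases hcase : ∃ y, y ∈ Mlvl H n ∧ ∀ z, z ∈ Mlvl H n → (z ∈ Y₀ ↔ Elvl H n z y)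
  · obtain ⟨y, hyM, hy⟩ := hcase
    refine ⟨y, ⟨n, hyM⟩, ?_⟩
    ext x
    simp only [Set.mem_setOf_eq]
    constructor
    · intro hx
      exact ⟨⟨n, hYM x hx⟩,
        (Eomega_iff H hyM).mpr ((hy x (hYM x hx)).mp ((hmemY₀ x).mpr hx))⟩
    · rintro ⟨-, hE⟩
      have hEn := (Eomega_iff H hyM).mp hE
      exact (hmemY₀ x).mp ((hy x (Elvl_dom H hEn).1).mpr hEn)
  · have hY₀D : Y₀ ∈ bdefic (Mlvl H n) (Elvl H n) (dlvl H n) := by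
      rw [bdefic, ZFSet.mem_sep]
      refine ⟨ZFSet.mem_powerset.mpr fun z hz => (ZFSet.mem_sep.mp hz).1, hcase, ?_⟩
      obtain ⟨B, hB⟩ := pred_d_bdd H hXn
      refine Set.Finite.subset (Set.finite_Iic B) ?_
      rintro - ⟨z, hz, rfl⟩
      exact hB z (hYpred z ((hmemY₀ z).mp hz))
    have hY'M : ZFSet.pair (tag (n + 1)) Y₀ ∈ Mlvl H (n + 1) := by
      rw [Mlvl_succ, ZFSet.mem_union]
      exact Or.inr (ZFSet.mem_prod.mpr ⟨_, ZFSet.mem_singleton.mpr rfl, _, hY₀D, rfl⟩)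
    refine ⟨ZFSet.pair (tag (n + 1)) Y₀, ⟨n + 1, hY'M⟩, ?_⟩
    ext x
    simp only [Set.mem_setOf_eq]
    constructor
    · intro hx
      exact ⟨⟨n, hYM x hx⟩,
        (Eomega_iff H hY'M).mpr (Or.inr ⟨Y₀, hY₀D, rfl, (hmemY₀ x).mpr hx⟩)⟩
    · rintro ⟨-, hE⟩
      rcases (Eomega_iff H hY'M).mp hE with h | ⟨X', hX', he, hxX⟩
      · exact absurd (Elvl_dom H h).2 (newnode_not_mem H (le_refl n) Y₀)
      · obtain ⟨-, rfl⟩ := ZFSet.pair_injective he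
        exact (hmemY₀ x).mp hxX
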